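/- arXiv:2306.17774 — 2 statements merged into one kernel-verified Lean document; each statement's English description precedes it below -/
import Mathlib

section
/- Let (u, v, pu, pv) solve the FLRW null geodesic system on an interval I with angular momentum L = 0, and suppose pu·pv = 0 at some point of I (the mass shell relation for L = 0). Then the functions t·pu and t·pv are each constant on I. -/
/-!
For `L = 0` we have `√t = (v+u)/2`, and both momenta obey the Riccati equation
`p' = -2p²/(v+u)`. Since `t' = ((v+u)/2)(pu+pv)`, this gives `(t·pu)' = (t·pv)' = √t·pu·pv`,
and then `t·pu·pv` is conserved. It vanishes at one point and `t > 0`, so `pu·pv ≡ 0` on `I`,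
and both `t·pu` and `t·pv` have zero derivative.
-/

/-- The time coordinate `t = (v+u)²/4` along a curve in double null coordinates. -/
noncomputable def tOf (u v : ℝ → ℝ) (s : ℝ) : ℝ := (v s + u s) ^ 2 / 4

/-- The radial coordinate `r = v − u` along a curve in double null coordinates. -/
noncomputable def rOf (u v : ℝ → ℝ) (s : ℝ) : ℝ := v s - u s

/-- **The FLRW null geodesic system** with angular momentum `L` on a set `I ⊆ ℝ`:
`u' = pu`, `v' = pv`,
`pu' = −t^{−1/2}·pu² − (1/2)(1/(2t^{1/2}) + 1/r)·L²/(t²r²)`,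
`pv' = −t^{−1/2}·pv² − (1/2)(1/(2t^{1/2}) − 1/r)·L²/(t²r²)`,
where `t = (v+u)²/4` and `r = v−u` are required to satisfy `v+u > 0`, `r > 0` on `I`,
and `pu ≥ 0`, `pv ≥ 0` on `I`. -/
def FLRWGeodesicSystem (I : Set ℝ) (L : ℝ) (u v pu pv : ℝ → ℝ) : Prop :=
  (∀ s ∈ I, 0 < v s + u s) ∧
  (∀ s ∈ I, 0 < rOf u v s) ∧
  (∀ s ∈ I, 0 ≤ pu s) ∧
  (∀ s ∈ I, 0 ≤ pv s) ∧
  (∀ s ∈ I, HasDerivAt u (pu s) s) ∧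
  (∀ s ∈ I, HasDerivAt v (pv s) s) ∧
  (∀ s ∈ I, HasDerivAt pu
    (-(pu s) ^ 2 / Real.sqrt (tOf u v s)
      - 1 / 2 * (1 / (2 * Real.sqrt (tOf u v s)) + 1 / rOf u v s) * L ^ 2
          / ((tOf u v s) ^ 2 * (rOf u v s) ^ 2)) s) ∧
  (∀ s ∈ I, HasDerivAt pv
    (-(pv s) ^ 2 / Real.sqrt (tOf u v s)
      - 1 / 2 * (1 / (2 * Real.sqrt (tOf u v s)) - 1 / rOf u v s) * L ^ 2
          / ((tOf u v s) ^ 2 * (rOf u v s) ^ 2)) s)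

theorem Convex.is_const_of_hasDerivAt_eq_zero {E : Type*} [NormedAddCommGroup E]
    [NormedSpace ℝ E] {I : Set ℝ} (hI : Convex ℝ I) {f : ℝ → E}
    (hf : ∀ s ∈ I, HasDerivAt f 0 s) {x y : ℝ} (hx : x ∈ I) (hy : y ∈ I) : f x = f y := by
  have h := hI.norm_image_sub_le_of_norm_hasDerivWithin_le (f' := fun _ => (0 : E)) (C := 0)
    (fun s hs => (hf s hs).hasDerivWithinAt) (fun _ _ => by simp) hx hy
  rw [zero_mul, norm_le_zero_iff, sub_eq_zero] at h
  exact h.symm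

section

variable {u v p q : ℝ → ℝ} {s : ℝ}

theorem sqrt_tOf (hw : 0 < v s + u s) : √(tOf u v s) = (v s + u s) / 2 := by
  rw [tOf, show (v s + u s) ^ 2 / 4 = ((v s + u s) / 2) ^ 2 by ring, Real.sqrt_sq (by positivity)]

theorem flrw_momentum_rhs_of_radial (hw : 0 < v s + u s) (x c d : ℝ) :
    -x ^ 2 / √(tOf u v s) - 1 / 2 * c * (0 : ℝ) ^ 2 / d = -(2 * x ^ 2 / (v s + u s)) := by
  rw [sqrt_tOf hw]
  field_simp
  ring

theorem hasDerivAt_tOf_mul (hvu : HasDerivAt (fun x => v x + u x) (p s + q s) s)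
    (hp : HasDerivAt p (-(2 * p s ^ 2 / (v s + u s))) s) :
    HasDerivAt (fun x => tOf u v x * p x) ((v s + u s) / 2 * (p s * q s)) s := by
  refine (((hvu.pow 2).div_const 4).mul hp).congr_deriv ?_
  simp only [Pi.pow_apply]
  field_simp
  ring

theorem hasDerivAt_tOf_mul_mul (hvu : HasDerivAt (fun x => v x + u x) (p s + q s) s)
    (hp : HasDerivAt p (-(2 * p s ^ 2 / (v s + u s))) s)
    (hq : HasDerivAt q (-(2 * q s ^ 2 / (v s + u s))) s) :
    HasDerivAt (fun x => tOf u v x * p x * q x) 0 s := by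
  refine ((hasDerivAt_tOf_mul hvu hp).mul hq).congr_deriv ?_
  rw [tOf]
  field_simp
  ring

end

/-- **Radial null geodesics in FLRW.**
If `(u,v,pu,pv)` solves the FLRW null geodesic system on an interval `I` with angular
momentum `L = 0`, and `pu·pv = 0` at some point of `I` (the mass shell relation for
`L = 0`), then `t·pu` and `t·pv` are each constant on `I`. -/
theorem flrw_radial_geodesic_constants (I : Set ℝ) (hI : Convex ℝ I)
    (u v pu pv : ℝ → ℝ) (hsys : FLRWGeodesicSystem I 0 u v pu pv)
    (hms : ∃ s ∈ I, pu s * pv s = 0) :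
    (∀ s₁ ∈ I, ∀ s₂ ∈ I, tOf u v s₁ * pu s₁ = tOf u v s₂ * pu s₂) ∧
    (∀ s₁ ∈ I, ∀ s₂ ∈ I, tOf u v s₁ * pv s₁ = tOf u v s₂ * pv s₂) := by
  obtain ⟨hw, -, -, -, hu, hv, hpu, hpv⟩ := hsys
  have hpu' : ∀ s ∈ I, HasDerivAt pu (-(2 * pu s ^ 2 / (v s + u s))) s := fun s hs =>
    (hpu s hs).congr_deriv (flrw_momentum_rhs_of_radial (hw s hs) _ _ _)
  have hpv' : ∀ s ∈ I, HasDerivAt pv (-(2 * pv s ^ 2 / (v s + u s))) s := fun s hs =>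
    (hpv s hs).congr_deriv (flrw_momentum_rhs_of_radial (hw s hs) _ _ _)
  have hvu : ∀ s ∈ I, HasDerivAt (fun x => v x + u x) (pu s + pv s) s := fun s hs =>
    ((hv s hs).add (hu s hs)).congr_deriv (add_comm _ _)
  have hvu' : ∀ s ∈ I, HasDerivAt (fun x => v x + u x) (pv s + pu s) s := fun s hs =>
    (hv s hs).add (hu s hs)
  obtain ⟨s₀, hs₀, hnull₀⟩ := hms
  have hnull : ∀ s ∈ I, pu s * pv s = 0 := by
    intro s hs
    have h := hI.is_const_of_hasDerivAt_eq_zero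
      (fun x hx => hasDerivAt_tOf_mul_mul (hvu x hx) (hpu' x hx) (hpv' x hx)) hs hs₀
    rw [mul_assoc, mul_assoc, hnull₀, mul_zero] at h
    have htpos : 0 < tOf u v s := by have := hw s hs; unfold tOf; positivity
    exact (mul_eq_zero.1 h).resolve_left htpos.ne'
  constructor
  · refine fun s₁ h₁ s₂ h₂ =>
      hI.is_const_of_hasDerivAt_eq_zero (f := fun x => tOf u v x * pu x) (fun s hs => ?_) h₁ h₂
    simpa [hnull s hs] using hasDerivAt_tOf_mul (hvu s hs) (hpu' s hs)
  · refine fun s₁ h₁ s₂ h₂ =>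
      hI.is_const_of_hasDerivAt_eq_zero (f := fun x => tOf u v x * pv x) (fun s hs => ?_) h₁ h₂
    simpa [mul_comm (pv s), hnull s hs] using
      hasDerivAt_tOf_mul (hvu' s hs) (hpv' s hs)
end

section
/- Let (u, v, pu, pv) solve the FLRW null geodesic system on [s₁,S) with angular momentum L > 0, with the mass shell relation 4t²r²·pu·pv = L² holding on [s₁,S). (i) If pv(s₁) ≥ pu(s₁), then pv(s) ≥ pu(s) for all s ∈ [s₁,S), and r is nondecreasing on [s₁,S). (ii) If pv(s) < pu(s) for all s ∈ [s₁,S), then, setting A := t(s₁)·(pu(s₁) − pv(s₁)) > 0, one has r(s) ≥ (r(s₁)^{−2} + 2A²/L²)^{−1/2} for all s ∈ [s₁,S); in particular inf_{[s₁,S)} r > 0, i.e. a non-radial null geodesic remains away from the centre of symmetry. -/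
open Set

/-! `D := t (pu - pv)` satisfies `D' = -L² / (t r³) ≤ 0`, so `pu ≤ pv` persists once it holds,
and then `r' = pv - pu ≥ 0`. Moreover `r⁻² + D² / L²` has derivative
`2 (pu - pv) / r³ + 2 D D' / L² = 0`, so `r(s)⁻² ≤ r(s₁)⁻² + D(s₁)² / L²`, which bounds `r` below
by a positive constant. -/

theorem Convex.monotoneOn_of_hasDerivAt_nonneg {D : Set ℝ} (hD : Convex ℝ D) {f f' : ℝ → ℝ}
    (hf : ∀ x ∈ D, HasDerivAt f (f' x) x) (hf'₀ : ∀ x ∈ D, 0 ≤ f' x) : MonotoneOn f D :=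
  monotoneOn_of_hasDerivWithinAt_nonneg hD (fun x hx ↦ (hf x hx).continuousAt.continuousWithinAt)
    (fun x hx ↦ (hf x (interior_subset hx)).hasDerivWithinAt)
    (fun x hx ↦ hf'₀ x (interior_subset hx))

theorem Convex.antitoneOn_of_hasDerivAt_nonpos {D : Set ℝ} (hD : Convex ℝ D) {f f' : ℝ → ℝ}
    (hf : ∀ x ∈ D, HasDerivAt f (f' x) x) (hf'₀ : ∀ x ∈ D, f' x ≤ 0) : AntitoneOn f D :=
  antitoneOn_of_hasDerivWithinAt_nonpos hD (fun x hx ↦ (hf x hx).continuousAt.continuousWithinAt)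
    (fun x hx ↦ (hf x (interior_subset hx)).hasDerivWithinAt)
    (fun x hx ↦ hf'₀ x (interior_subset hx))

theorem Real.rpow_neg_half_le_of_inv_sq_le {r B : ℝ} (hr : 0 < r) (h : (r ^ 2)⁻¹ ≤ B) :
    B ^ (-(1 : ℝ) / 2) ≤ r := by
  calc B ^ (-(1 : ℝ) / 2) ≤ ((r ^ 2)⁻¹) ^ (-(1 : ℝ) / 2) :=
        Real.rpow_le_rpow_of_nonpos (by positivity) h (by norm_num)
    _ = r := by
        rw [Real.inv_rpow (by positivity), ← Real.rpow_neg (by positivity), neg_div, neg_neg,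
          ← Real.sqrt_eq_rpow, Real.sqrt_sq hr.le]

noncomputable def momentumImbalance (u v pu pv : ℝ → ℝ) (s : ℝ) : ℝ :=
  tOf u v s * (pu s - pv s)

/-- Under the mass shell relation this is `(t (pu + pv) / L)²`, the square of the energy that is
conserved because the metric is conformal to Minkowski space. -/
noncomputable def flrwInvariant (L : ℝ) (u v pu pv : ℝ → ℝ) (s : ℝ) : ℝ :=
  (rOf u v s ^ 2)⁻¹ + momentumImbalance u v pu pv s ^ 2 / L ^ 2

theorem hasDerivAt_tOf {u v : ℝ → ℝ} {u' v' s : ℝ} (hu : HasDerivAt u u' s)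
    (hv : HasDerivAt v v' s) (hpos : 0 ≤ v s + u s) :
    HasDerivAt (tOf u v) (Real.sqrt (tOf u v s) * (u' + v')) s := by
  have hsqrt : Real.sqrt (tOf u v s) = (v s + u s) / 2 := by
    rw [tOf, show (v s + u s) ^ 2 / 4 = ((v s + u s) / 2) ^ 2 by ring, Real.sqrt_sq (by linarith)]
  refine (((hv.add hu).pow 2).div_const 4).congr_deriv ?_
  rw [hsqrt, Pi.add_apply]
  ring

namespace FLRWGeodesicSystem

variable {I : Set ℝ} {L : ℝ} {u v pu pv : ℝ → ℝ} {s : ℝ}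

theorem rOf_pos (h : FLRWGeodesicSystem I L u v pu pv) (hs : s ∈ I) : 0 < rOf u v s :=
  h.2.1 s hs

theorem hasDerivAt_rOf (h : FLRWGeodesicSystem I L u v pu pv) (hs : s ∈ I) :
    HasDerivAt (rOf u v) (pv s - pu s) s :=
  (h.2.2.2.2.2.1 s hs).sub (h.2.2.2.2.1 s hs)

theorem tOf_pos (h : FLRWGeodesicSystem I L u v pu pv) (hs : s ∈ I) : 0 < tOf u v s := by
  have := h.1 s hs
  unfold tOf
  positivity

theorem hasDerivAt_momentumImbalance (h : FLRWGeodesicSystem I L u v pu pv) (hs : s ∈ I) :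
    HasDerivAt (momentumImbalance u v pu pv) (-L ^ 2 / (tOf u v s * rOf u v s ^ 3)) s := by
  have ht := h.tOf_pos hs
  obtain ⟨hvu, hr, -, -, hu', hv', hpu', hpv'⟩ := h
  refine ((hasDerivAt_tOf (hu' s hs) (hv' s hs) (hvu s hs).le).mul
    ((hpu' s hs).sub (hpv' s hs))).congr_deriv ?_
  have hsq : Real.sqrt (tOf u v s) ^ 2 = tOf u v s := Real.sq_sqrt ht.le
  have hs0 : Real.sqrt (tOf u v s) ≠ 0 := by positivity
  have hr0 : rOf u v s ≠ 0 := (hr s hs).ne'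
  rw [Pi.sub_apply, ← hsq]
  field_simp
  rw [Real.sqrt_sq (Real.sqrt_nonneg _)]
  ring

theorem momentumImbalance_antitoneOn (h : FLRWGeodesicSystem I L u v pu pv) (hI : Convex ℝ I) :
    AntitoneOn (momentumImbalance u v pu pv) I :=
  hI.antitoneOn_of_hasDerivAt_nonpos (fun _ hs ↦ h.hasDerivAt_momentumImbalance hs) fun s hs ↦
    have := h.tOf_pos hs
    have := h.rOf_pos hs
    div_nonpos_of_nonpos_of_nonneg (neg_nonpos.2 (sq_nonneg L)) (by positivity)

theorem pu_le_pv_of_pu_le_pv_of_le (h : FLRWGeodesicSystem I L u v pu pv) (hI : Convex ℝ I)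
    {s₁ : ℝ} (hs₁ : s₁ ∈ I) (h₁ : pu s₁ ≤ pv s₁) (hs : s ∈ I) (hle : s₁ ≤ s) : pu s ≤ pv s := by
  have hD : momentumImbalance u v pu pv s ≤ momentumImbalance u v pu pv s₁ :=
    h.momentumImbalance_antitoneOn hI hs₁ hs hle
  have hD₁ : momentumImbalance u v pu pv s₁ ≤ 0 :=
    mul_nonpos_of_nonneg_of_nonpos (h.tOf_pos hs₁).le (sub_nonpos.2 h₁)
  exact sub_nonpos.1 <| nonpos_of_mul_nonpos_right (hD.trans hD₁) (h.tOf_pos hs)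

theorem monotoneOn_rOf (h : FLRWGeodesicSystem I L u v pu pv) (hI : Convex ℝ I)
    (hle : ∀ s ∈ I, pu s ≤ pv s) : MonotoneOn (rOf u v) I :=
  hI.monotoneOn_of_hasDerivAt_nonneg (fun _ hs ↦ h.hasDerivAt_rOf hs) fun s hs ↦
    sub_nonneg.2 (hle s hs)

theorem hasDerivAt_flrwInvariant (h : FLRWGeodesicSystem I L u v pu pv) (hL : L ≠ 0)
    (hs : s ∈ I) : HasDerivAt (flrwInvariant L u v pu pv) 0 s := by
  have hr : rOf u v s ≠ 0 := (h.rOf_pos hs).ne'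
  have ht : tOf u v s ≠ 0 := (h.tOf_pos hs).ne'
  refine ((((h.hasDerivAt_rOf hs).pow 2).inv (pow_ne_zero 2 hr)).add
    (((h.hasDerivAt_momentumImbalance hs).pow 2).div_const (L ^ 2))).congr_deriv ?_
  simp only [Pi.pow_apply, momentumImbalance]
  field_simp
  ring

theorem flrwInvariant_eq (h : FLRWGeodesicSystem I L u v pu pv) (hI : Convex ℝ I) (hL : L ≠ 0)
    {s' : ℝ} (hs : s ∈ I) (hs' : s' ∈ I) :
    flrwInvariant L u v pu pv s = flrwInvariant L u v pu pv s' := by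
  have hderiv : ∀ x ∈ I, HasDerivAt (flrwInvariant L u v pu pv) 0 x :=
    fun _ hx ↦ h.hasDerivAt_flrwInvariant hL hx
  have hanti := hI.antitoneOn_of_hasDerivAt_nonpos hderiv fun _ _ ↦ le_rfl
  have hmono := hI.monotoneOn_of_hasDerivAt_nonneg hderiv fun _ _ ↦ le_rfl
  rcases le_total s s' with hss' | hs's
  · exact le_antisymm (hmono hs hs' hss') (hanti hs hs' hss')
  · exact le_antisymm (hanti hs' hs hs's) (hmono hs' hs hs's)

theorem inv_sq_rOf_le (h : FLRWGeodesicSystem I L u v pu pv) (hI : Convex ℝ I) (hL : L ≠ 0)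
    {s₁ : ℝ} (hs₁ : s₁ ∈ I) (hs : s ∈ I) :
    (rOf u v s ^ 2)⁻¹ ≤ (rOf u v s₁ ^ 2)⁻¹ + momentumImbalance u v pu pv s₁ ^ 2 / L ^ 2 :=
  calc (rOf u v s ^ 2)⁻¹ ≤ flrwInvariant L u v pu pv s :=
        le_add_of_nonneg_right (by positivity)
    _ = _ := h.flrwInvariant_eq hI hL hs hs₁

end FLRWGeodesicSystem

theorem flrw_nonradial_geodesic_away_from_centre_general (s₁ S L : ℝ) (hs₁S : s₁ < S)
    (hL : 0 < L) (u v pu pv : ℝ → ℝ)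
    (hsys : FLRWGeodesicSystem (Ico s₁ S) L u v pu pv) :
    ((pu s₁ ≤ pv s₁ →
      (∀ s ∈ Ico s₁ S, pu s ≤ pv s) ∧ MonotoneOn (rOf u v) (Ico s₁ S))) ∧
    ((∀ s ∈ Ico s₁ S, pv s < pu s) →
      (∀ s ∈ Ico s₁ S,
        (1 / (rOf u v s₁) ^ 2
            + 2 * (tOf u v s₁ * (pu s₁ - pv s₁)) ^ 2 / L ^ 2) ^ (-(1 : ℝ) / 2)
          ≤ rOf u v s) ∧
      0 < tOf u v s₁ * (pu s₁ - pv s₁) ∧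
      ∃ c > (0 : ℝ), ∀ s ∈ Ico s₁ S, c ≤ rOf u v s) := by
  have hI : Convex ℝ (Ico s₁ S) := convex_Ico s₁ S
  have hs₁ : s₁ ∈ Ico s₁ S := left_mem_Ico.2 hs₁S
  refine ⟨fun h₁ ↦ ?_, fun h₂ ↦ ?_⟩
  · have hle : ∀ s ∈ Ico s₁ S, pu s ≤ pv s := fun s hs ↦
      hsys.pu_le_pv_of_pu_le_pv_of_le hI hs₁ h₁ hs hs.1
    exact ⟨hle, hsys.monotoneOn_rOf hI hle⟩
  · have hr₁ : 0 < rOf u v s₁ := hsys.rOf_pos hs₁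
    have hbound : ∀ s ∈ Ico s₁ S, (1 / (rOf u v s₁) ^ 2
        + 2 * (tOf u v s₁ * (pu s₁ - pv s₁)) ^ 2 / L ^ 2) ^ (-(1 : ℝ) / 2) ≤ rOf u v s := by
      intro s hs
      have hinv := hsys.inv_sq_rOf_le hI hL.ne' hs₁ hs
      have hA : 0 ≤ momentumImbalance u v pu pv s₁ ^ 2 / L ^ 2 := by positivity
      unfold momentumImbalance at hinv hA
      refine Real.rpow_neg_half_le_of_inv_sq_le (hsys.rOf_pos hs) ?_
      rw [one_div, mul_div_assoc]
      linarith
    exact ⟨hbound, mul_pos (hsys.tOf_pos hs₁) (sub_pos.2 (h₂ s₁ hs₁)), _,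
      Real.rpow_pos_of_pos (by positivity) _, hbound⟩

/-- **Non-radial null geodesics in FLRW remain away from the centre.**
Let `(u,v,pu,pv)` solve the FLRW null geodesic system on `[s₁,S)` with angular momentum
`L > 0`, with the mass shell relation `4t²r²·pu·pv = L²` holding on `[s₁,S)`.
(i) If `pv(s₁) ≥ pu(s₁)` then `pv ≥ pu` on `[s₁,S)` and `r` is nondecreasing.
(ii) If `pv < pu` on all of `[s₁,S)` then, with `A := t(s₁)(pu(s₁) − pv(s₁)) > 0`,
`r(s) ≥ (r(s₁)^{−2} + 2A²/L²)^{−1/2}` on `[s₁,S)`; in particular `inf r > 0`. -/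
theorem flrw_nonradial_geodesic_away_from_centre (s₁ S L : ℝ) (hs₁S : s₁ < S)
    (hL : 0 < L) (u v pu pv : ℝ → ℝ)
    (hsys : FLRWGeodesicSystem (Ico s₁ S) L u v pu pv)
    (hms : ∀ s ∈ Ico s₁ S,
      4 * (tOf u v s) ^ 2 * (rOf u v s) ^ 2 * pu s * pv s = L ^ 2) :
    ((pu s₁ ≤ pv s₁ →
      (∀ s ∈ Ico s₁ S, pu s ≤ pv s) ∧ MonotoneOn (rOf u v) (Ico s₁ S))) ∧
    ((∀ s ∈ Ico s₁ S, pv s < pu s) →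
      (∀ s ∈ Ico s₁ S,
        (1 / (rOf u v s₁) ^ 2
            + 2 * (tOf u v s₁ * (pu s₁ - pv s₁)) ^ 2 / L ^ 2) ^ (-(1 : ℝ) / 2)
          ≤ rOf u v s) ∧
      0 < tOf u v s₁ * (pu s₁ - pv s₁) ∧
      ∃ c > (0 : ℝ), ∀ s ∈ Ico s₁ S, c ≤ rOf u v s) :=
  flrw_nonradial_geodesic_away_from_centre_general s₁ S L hs₁S hL u v pu pv hsys
end
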